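/- For generic vectors A, Z₁,…,Z₅ ∈ ℝ⁴ (all brackets appearing below nonzero), the following rational identity holds: −⟨1234⟩²⟨1245⟩/(⟨A123⟩⟨A124⟩⟨A145⟩⟨A234⟩) + ⟨1235⟩⟨1245⟩⟨1345⟩/(⟨A123⟩⟨A125⟩⟨A145⟩⟨A345⟩) − ⟨1234⟩⟨1235⟩⟨2345⟩/(⟨A123⟩⟨A125⟩⟨A234⟩⟨A345⟩) − ⟨1234⟩⟨1345⟩⟨2345⟩/(⟨A123⟩⟨A145⟩⟨A234⟩⟨A345⟩) − ⟨1245⟩⟨2345⟩²/(⟨A125⟩⟨A234⟩⟨A245⟩⟨A345⟩) = ⟨1245⟩³/(⟨A124⟩⟨A245⟩⟨A145⟩⟨A125⟩). -/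
import Mathlib

noncomputable def det4 (x y z w : Fin 4 → ℝ) : ℝ := Matrix.det (Matrix.of ![x, y, z, w])

lemma det4_expand (x y z w : Fin 4 → ℝ) : det4 x y z w =
    x 0 * (y 1 * (z 2 * w 3 - z 3 * w 2) - y 2 * (z 1 * w 3 - z 3 * w 1) + y 3 * (z 1 * w 2 - z 2 * w 1))
  - x 1 * (y 0 * (z 2 * w 3 - z 3 * w 2) - y 2 * (z 0 * w 3 - z 3 * w 0) + y 3 * (z 0 * w 2 - z 2 * w 0))
  + x 2 * (y 0 * (z 1 * w 3 - z 3 * w 1) - y 1 * (z 0 * w 3 - z 3 * w 0) + y 3 * (z 0 * w 1 - z 1 * w 0))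
  - x 3 * (y 0 * (z 1 * w 2 - z 2 * w 1) - y 1 * (z 0 * w 2 - z 2 * w 0) + y 2 * (z 0 * w 1 - z 1 * w 0)) := by
  have e1 : (Fin.succ 2 : Fin 4) = 3 := rfl
  have e2 : (2 : Fin 4).succAbove 2 = 3 := rfl
  have e3 : (1 : Fin 4).succAbove 2 = 3 := rfl
  have e4 : (3 : Fin 4).succAbove 2 = 2 := rfl
  have e5 : (Fin.castSucc 2 : Fin 4) = 2 := rfl
  simp [det4, Matrix.det_succ_row_zero, Fin.sum_univ_succ, Fin.val_succ, e1, e2, e3, e4, e5]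
  ring

lemma decomp (A Z1 Z2 Z4 v : Fin 4 → ℝ) (h : det4 A Z1 Z2 Z4 ≠ 0) :
    ∃ c0 c1 c2 c4 : ℝ, ∀ i, v i = c0 * A i + c1 * Z1 i + c2 * Z2 i + c4 * Z4 i := by
  set M : Matrix (Fin 4) (Fin 4) ℝ := Matrix.of ![A, Z1, Z2, Z4] with hM
  have hdet : IsUnit M.det := isUnit_iff_ne_zero.mpr h
  set c := Matrix.vecMul v M⁻¹ with hc
  have key : Matrix.vecMul c M = v := by
    rw [hc, Matrix.vecMul_vecMul, Matrix.nonsing_inv_mul M hdet, Matrix.vecMul_one]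
  refine ⟨c 0, c 1, c 2, c 3, fun i => ?_⟩
  have := congrFun key i
  rw [Matrix.vecMul, dotProduct] at this
  simp only [Fin.sum_univ_four] at this
  rw [← this, hM]
  simp [Matrix.of_apply]

set_option maxHeartbeats 2000000 in
theorem quadrilateral_coefficient_identity (A Z₁ Z₂ Z₃ Z₄ Z₅ : Fin 4 → ℝ)
    (h1 : det4 A Z₁ Z₂ Z₃ ≠ 0) (h2 : det4 A Z₁ Z₂ Z₄ ≠ 0) (h3 : det4 A Z₁ Z₄ Z₅ ≠ 0)
    (h4 : det4 A Z₂ Z₃ Z₄ ≠ 0) (h5 : det4 A Z₁ Z₂ Z₅ ≠ 0) (h6 : det4 A Z₃ Z₄ Z₅ ≠ 0)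
    (h7 : det4 A Z₂ Z₄ Z₅ ≠ 0) :
    -(det4 Z₁ Z₂ Z₃ Z₄)^2 * det4 Z₁ Z₂ Z₄ Z₅ /
        (det4 A Z₁ Z₂ Z₃ * det4 A Z₁ Z₂ Z₄ * det4 A Z₁ Z₄ Z₅ * det4 A Z₂ Z₃ Z₄)
    + det4 Z₁ Z₂ Z₃ Z₅ * det4 Z₁ Z₂ Z₄ Z₅ * det4 Z₁ Z₃ Z₄ Z₅ /
        (det4 A Z₁ Z₂ Z₃ * det4 A Z₁ Z₂ Z₅ * det4 A Z₁ Z₄ Z₅ * det4 A Z₃ Z₄ Z₅)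
    - det4 Z₁ Z₂ Z₃ Z₄ * det4 Z₁ Z₂ Z₃ Z₅ * det4 Z₂ Z₃ Z₄ Z₅ /
        (det4 A Z₁ Z₂ Z₃ * det4 A Z₁ Z₂ Z₅ * det4 A Z₂ Z₃ Z₄ * det4 A Z₃ Z₄ Z₅)
    - det4 Z₁ Z₂ Z₃ Z₄ * det4 Z₁ Z₃ Z₄ Z₅ * det4 Z₂ Z₃ Z₄ Z₅ /
        (det4 A Z₁ Z₂ Z₃ * det4 A Z₁ Z₄ Z₅ * det4 A Z₂ Z₃ Z₄ * det4 A Z₃ Z₄ Z₅)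
    - det4 Z₁ Z₂ Z₄ Z₅ * (det4 Z₂ Z₃ Z₄ Z₅)^2 /
        (det4 A Z₁ Z₂ Z₅ * det4 A Z₂ Z₃ Z₄ * det4 A Z₂ Z₄ Z₅ * det4 A Z₃ Z₄ Z₅)
    = (det4 Z₁ Z₂ Z₄ Z₅)^3 /
        (det4 A Z₁ Z₂ Z₄ * det4 A Z₂ Z₄ Z₅ * det4 A Z₁ Z₄ Z₅ * det4 A Z₁ Z₂ Z₅) := by
  obtain ⟨x0, x1, x2, x4, hZ3⟩ := decomp A Z₁ Z₂ Z₄ Z₃ h2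
  obtain ⟨y0, y1, y2, y4, hZ5⟩ := decomp A Z₁ Z₂ Z₄ Z₅ h2
  have e1 : det4 A Z₁ Z₂ Z₃ = x4 * det4 A Z₁ Z₂ Z₄ := by
    simp only [det4_expand]; rw [hZ3 0, hZ3 1, hZ3 2, hZ3 3]; ring
  have e2 : det4 A Z₁ Z₄ Z₅ = -y2 * det4 A Z₁ Z₂ Z₄ := by
    simp only [det4_expand]; rw [hZ5 0, hZ5 1, hZ5 2, hZ5 3]; ring
  have e3 : det4 A Z₂ Z₃ Z₄ = -x1 * det4 A Z₁ Z₂ Z₄ := by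
    simp only [det4_expand]; rw [hZ3 0, hZ3 1, hZ3 2, hZ3 3]; ring
  have e4 : det4 A Z₁ Z₂ Z₅ = y4 * det4 A Z₁ Z₂ Z₄ := by
    simp only [det4_expand]; rw [hZ5 0, hZ5 1, hZ5 2, hZ5 3]; ring
  have e5 : det4 A Z₃ Z₄ Z₅ = (x2*y1 - x1*y2) * det4 A Z₁ Z₂ Z₄ := by
    simp only [det4_expand]; rw [hZ3 0, hZ3 1, hZ3 2, hZ3 3, hZ5 0, hZ5 1, hZ5 2, hZ5 3]; ring
  have e6 : det4 A Z₂ Z₄ Z₅ = y1 * det4 A Z₁ Z₂ Z₄ := by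
    simp only [det4_expand]; rw [hZ5 0, hZ5 1, hZ5 2, hZ5 3]; ring
  have e7 : det4 Z₁ Z₂ Z₃ Z₄ = x0 * det4 A Z₁ Z₂ Z₄ := by
    simp only [det4_expand]; rw [hZ3 0, hZ3 1, hZ3 2, hZ3 3]; ring
  have e8 : det4 Z₁ Z₂ Z₄ Z₅ = -y0 * det4 A Z₁ Z₂ Z₄ := by
    simp only [det4_expand]; rw [hZ5 0, hZ5 1, hZ5 2, hZ5 3]; ring
  have e9 : det4 Z₁ Z₂ Z₃ Z₅ = (x0*y4 - x4*y0) * det4 A Z₁ Z₂ Z₄ := by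
    simp only [det4_expand]; rw [hZ3 0, hZ3 1, hZ3 2, hZ3 3, hZ5 0, hZ5 1, hZ5 2, hZ5 3]; ring
  have e10 : det4 Z₁ Z₃ Z₄ Z₅ = (x0*y2 - x2*y0) * det4 A Z₁ Z₂ Z₄ := by
    simp only [det4_expand]; rw [hZ3 0, hZ3 1, hZ3 2, hZ3 3, hZ5 0, hZ5 1, hZ5 2, hZ5 3]; ring
  have e11 : det4 Z₂ Z₃ Z₄ Z₅ = (x1*y0 - x0*y1) * det4 A Z₁ Z₂ Z₄ := by
    simp only [det4_expand]; rw [hZ3 0, hZ3 1, hZ3 2, hZ3 3, hZ5 0, hZ5 1, hZ5 2, hZ5 3]; ring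
  have hx4 : x4 ≠ 0 := fun h => h1 (by rw [e1, h, zero_mul])
  have hy2 : y2 ≠ 0 := fun h => h3 (by rw [e2, h]; ring)
  have hx1 : x1 ≠ 0 := fun h => h4 (by rw [e3, h]; ring)
  have hy4 : y4 ≠ 0 := fun h => h5 (by rw [e4, h, zero_mul])
  have hy1 : y1 ≠ 0 := fun h => h7 (by rw [e6, h, zero_mul])
  obtain ⟨w, hw⟩ : ∃ w, x2*y1 - x1*y2 = w := ⟨_, rfl⟩
  rw [hw] at e5
  have hw' : w ≠ 0 := fun h => h6 (by rw [e5, h, zero_mul])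
  rw [e1, e2, e3, e4, e5, e6, e7, e8, e9, e10, e11]
  have hD : det4 A Z₁ Z₂ Z₄ ≠ 0 := h2
  field_simp
  rw [← hw]
  ring
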